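/- arXiv:2512.07550 — 2 statements merged into one kernel-verified Lean document; each statement's English description precedes it below -/
import Mathlib

section
/- One-potential form of Kantorovich duality on a finite space: let X be a finite set, d a metric on X, and μ, ν probability vectors on X. Then W(μ,ν) = sup over all functions f : X → ℝ of [ Σ_{y∈X} f(y) μ(y) + Σ_{z₂∈X} ( min_{z₁∈X} ( d(z₁,z₂) − f(z₁) ) ) ν(z₂) ]. -/
/-!
Both sides are the values of a finite linear program and its dual. Weak duality is the pointwise
inequality `f y + cTransform d f z ≤ d y z` integrated against a coupling. For the converse, take `t` below
every transport cost: the point `(μ, ν, t)` then lies outside the compact convex image of the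
simplex of transport plans under `Γ ↦ (first marginal, second marginal, cost)`, and the
coefficients of a separating hyperplane, normalised by its (positive) cost coefficient, are two
potentials `F y + G z ≤ d y z` whose dual value exceeds `t`. Replacing `G` by the c-transform of
`F` only increases the dual value.
-/

open Finset

/-- A probability vector on a finite set `X`. -/
def IsProbVec {X : Type*} [Fintype X] (μ : X → ℝ) : Prop :=
  (∀ x, 0 ≤ μ x) ∧ ∑ x, μ x = 1

/-- A coupling of two probability vectors on a finite set `X`. -/
def IsCoupling {X : Type*} [Fintype X] (μ ν : X → ℝ) (Γ : X × X → ℝ) : Prop :=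
  (∀ p, 0 ≤ Γ p) ∧ (∀ y, ∑ z, Γ (y, z) = μ y) ∧ (∀ z, ∑ y, Γ (y, z) = ν z)

/-- `d` is a metric on `X`. -/
def IsMetricOn {X : Type*} (d : X → X → ℝ) : Prop :=
  (∀ x y, 0 ≤ d x y) ∧ (∀ x y, d x y = 0 ↔ x = y) ∧ (∀ x y, d x y = d y x) ∧
    (∀ x y z, d x z ≤ d x y + d y z)

/-- The 1-Wasserstein distance between probability vectors on a finite set. -/
noncomputable def Wass {X : Type*} [Fintype X] (d : X → X → ℝ) (μ ν : X → ℝ) : ℝ :=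
  sInf {c | ∃ Γ : X × X → ℝ, IsCoupling μ ν Γ ∧ c = ∑ p : X × X, Γ p * d p.1 p.2}

theorem map_prod_prod_eq_sum {R ι κ F : Type*} [CommSemiring R] [Fintype ι] [Fintype κ]
    [DecidableEq ι] [DecidableEq κ] [FunLike F ((ι → R) × (κ → R) × R) R]
    [LinearMapClass F R ((ι → R) × (κ → R) × R) R] (ℓ : F) (p : ι → R) (q : κ → R) (t : R) :
    ℓ (p, q, t) = ∑ i, p i * ℓ (Pi.single i 1, 0, 0) + ∑ j, q j * ℓ (0, Pi.single j 1, 0) +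
      t * ℓ (0, 0, 1) := by
  have hp : ((p, 0, 0) : (ι → R) × (κ → R) × R) = ∑ i, p i • (Pi.single i 1, 0, 0) := by
    ext <;> simp [Prod.fst_sum, Prod.snd_sum, Finset.sum_apply, Pi.single_apply]
  have hq : ((0, q, 0) : (ι → R) × (κ → R) × R) = ∑ j, q j • (0, Pi.single j 1, 0) := by
    ext <;> simp [Prod.fst_sum, Prod.snd_sum, Finset.sum_apply, Pi.single_apply]
  have ht : ((0, 0, t) : (ι → R) × (κ → R) × R) = t • (0, 0, 1) := by ext <;> simp
  have hsplit : ((p, q, t) : (ι → R) × (κ → R) × R) = (p, 0, 0) + (0, q, 0) + (0, 0, t) := by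
    ext <;> simp
  simp only [hsplit, map_add, hp, hq, ht, map_sum, map_smul, smul_eq_mul]

section Transport

variable {X : Type*} [Fintype X] (d : X → X → ℝ) {μ ν : X → ℝ}

def transportCost (Γ : X × X → ℝ) : ℝ :=
  ∑ p, Γ p * d p.1 p.2

@[simps]
noncomputable def marginalsAndCost : (X × X → ℝ) →ₗ[ℝ] (X → ℝ) × (X → ℝ) × ℝ where
  toFun Γ := (fun y => ∑ z, Γ (y, z), fun z => ∑ y, Γ (y, z), transportCost d Γ)
  map_add' Γ₁ Γ₂ := by
    ext <;> simp [transportCost, sum_add_distrib, add_mul]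
  map_smul' c Γ := by
    ext <;> simp [transportCost, mul_sum, mul_assoc]

theorem isCoupling_mul (hμ : IsProbVec μ) (hν : IsProbVec ν) :
    IsCoupling μ ν fun p => μ p.1 * ν p.2 :=
  ⟨fun p => mul_nonneg (hμ.1 p.1) (hν.1 p.2), fun y => by simp [← mul_sum, hν.2],
    fun z => by simp [← sum_mul, hμ.2]⟩

theorem IsCoupling.mem_stdSimplex {Γ : X × X → ℝ} (hΓ : IsCoupling μ ν Γ) (hμ : ∑ y, μ y = 1) :
    Γ ∈ stdSimplex ℝ (X × X) :=
  ⟨hΓ.1, by simp [Fintype.sum_prod_type, hΓ.2.1, hμ]⟩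

theorem sum_add_sum_le_transportCost {Γ : X × X → ℝ} (hΓ : IsCoupling μ ν Γ) {F G : X → ℝ}
    (hFG : ∀ y z, F y + G z ≤ d y z) :
    ∑ y, F y * μ y + ∑ z, G z * ν z ≤ transportCost d Γ := by
  obtain ⟨hΓ0, hΓμ, hΓν⟩ := hΓ
  calc ∑ y, F y * μ y + ∑ z, G z * ν z
      = ∑ y, ∑ z, (F y + G z) * Γ (y, z) := by
        simp only [← hΓμ, ← hΓν, mul_sum, add_mul, sum_add_distrib]
        rw [sum_comm (f := fun y z => G z * Γ (y, z))]
    _ ≤ ∑ y, ∑ z, Γ (y, z) * d y z :=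
        sum_le_sum fun y _ => sum_le_sum fun z _ => by
          rw [mul_comm]
          exact mul_le_mul_of_nonneg_left (hFG y z) (hΓ0 _)
    _ = transportCost d Γ := (Fintype.sum_prod_type (fun p => Γ p * d p.1 p.2)).symm

theorem marginalsAndCost_single [DecidableEq X] (y z : X) :
    marginalsAndCost d (Pi.single (y, z) 1) = (Pi.single y 1, Pi.single z 1, d y z) := by
  ext
  · simp [Pi.single_apply, Prod.ext_iff, ite_and, eq_comm]
  · simp [Pi.single_apply, Prod.ext_iff, ite_and, eq_comm]
  · simp [transportCost, Pi.single_apply, ite_mul]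

theorem marginalsAndCost_eq_iff {Γ : X × X → ℝ} {c : ℝ} :
    marginalsAndCost d Γ = (μ, ν, c) ↔
      (∀ y, ∑ z, Γ (y, z) = μ y) ∧ (∀ z, ∑ y, Γ (y, z) = ν z) ∧ transportCost d Γ = c := by
  simp [funext_iff]

theorem exists_separating_potentials (hμ : IsProbVec μ) (hν : IsProbVec ν) {t : ℝ}
    (ht : ∀ Γ, IsCoupling μ ν Γ → t < transportCost d Γ) :
    ∃ (f g : X → ℝ) (α u : ℝ), 0 < α ∧ (∀ y z, u < f y + g z + d y z * α) ∧
      ∑ y, μ y * f y + ∑ z, ν z * g z + t * α < u := by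
  classical
  set C := marginalsAndCost d '' stdSimplex ℝ (X × X)
  have hCconv : Convex ℝ C := (convex_stdSimplex ℝ _).linear_image _
  have hCcomp : IsCompact C :=
    (isCompact_stdSimplex ℝ _).image (marginalsAndCost d).continuous_of_finiteDimensional
  have hnot : (μ, ν, t) ∉ C := by
    rintro ⟨Γ, ⟨hΓ0, -⟩, hΓ⟩
    obtain ⟨hΓμ, hΓν, hcost⟩ := (marginalsAndCost_eq_iff d).1 hΓ
    exact (ht Γ ⟨hΓ0, hΓμ, hΓν⟩).ne' hcost
  obtain ⟨ℓ, u, hbelow, habove⟩ := geometric_hahn_banach_point_closed hCconv hCcomp.isClosed hnot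
  rw [map_prod_prod_eq_sum] at hbelow
  refine ⟨fun y => ℓ (Pi.single y 1, 0, 0), fun z => ℓ (0, Pi.single z 1, 0), ℓ (0, 0, 1), u,
    ?_, fun y z => ?_, hbelow⟩
  · -- the product coupling gives a point `(μ, ν, c₀)` of `C` with `t < c₀`, so the hyperplane
    -- cannot be vertical or tilted the wrong way
    have hΓ₀ := isCoupling_mul hμ hν
    have h := habove _ ⟨_, hΓ₀.mem_stdSimplex hμ.2, rfl⟩
    rw [(marginalsAndCost_eq_iff d).2 ⟨hΓ₀.2.1, hΓ₀.2.2, rfl⟩, map_prod_prod_eq_sum] at h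
    nlinarith [ht _ hΓ₀]
  · have h := habove _ ⟨_, single_mem_stdSimplex ℝ (y, z), rfl⟩
    rw [marginalsAndCost_single, map_prod_prod_eq_sum] at h
    simpa [Pi.single_apply] using h

theorem exists_admissible_potentials_gt (hμ : IsProbVec μ) (hν : IsProbVec ν) {t : ℝ}
    (ht : ∀ Γ, IsCoupling μ ν Γ → t < transportCost d Γ) :
    ∃ F G : X → ℝ, (∀ y z, F y + G z ≤ d y z) ∧ t < ∑ y, F y * μ y + ∑ z, G z * ν z := by
  obtain ⟨f, g, α, u, hα, hfg, hsep⟩ := exists_separating_potentials d hμ hν ht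
  refine ⟨fun y => -f y / α, fun z => (u - g z) / α, fun y z => ?_, ?_⟩
  · rw [← add_div, div_le_iff₀ hα]
    linarith [hfg y z]
  · have hsum : ∑ y, -f y / α * μ y + ∑ z, (u - g z) / α * ν z =
        (u - ∑ y, μ y * f y - ∑ z, ν z * g z) / α := by
      simp only [div_mul_eq_mul_div, ← sum_div, ← add_div, sub_mul, sum_sub_distrib, ← mul_sum,
        hν.2, neg_mul, sum_neg_distrib, mul_comm (f _), mul_comm (g _)]
      ring
    rw [hsum, lt_div_iff₀ hα]
    linarith

variable [Nonempty X]

def cTransform (f : X → ℝ) (z : X) : ℝ :=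
  univ.inf' univ_nonempty fun y => d y z - f y

def dualValue (μ ν f : X → ℝ) : ℝ :=
  ∑ y, f y * μ y + ∑ z, cTransform d f z * ν z

theorem add_cTransform_le (f : X → ℝ) (y z : X) : f y + cTransform d f z ≤ d y z := by
  have := inf'_le (fun y => d y z - f y) (mem_univ y)
  unfold cTransform
  linarith

theorem le_cTransform {f : X → ℝ} {z : X} {c : ℝ} (h : ∀ y, f y + c ≤ d y z) :
    c ≤ cTransform d f z :=
  le_inf' _ _ fun y _ => by linarith [h y]

theorem dualValue_le_transportCost {Γ : X × X → ℝ} (hΓ : IsCoupling μ ν Γ) (f : X → ℝ) :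
    dualValue d μ ν f ≤ transportCost d Γ :=
  sum_add_sum_le_transportCost d hΓ (add_cTransform_le d f)

theorem sum_add_sum_le_dualValue (hν : ∀ z, 0 ≤ ν z) {F G : X → ℝ}
    (hFG : ∀ y z, F y + G z ≤ d y z) :
    ∑ y, F y * μ y + ∑ z, G z * ν z ≤ dualValue d μ ν F :=
  add_le_add_right (sum_le_sum fun z _ =>
    mul_le_mul_of_nonneg_right (le_cTransform d fun y => hFG y z) (hν z)) _

theorem exists_lt_dualValue (hμ : IsProbVec μ) (hν : IsProbVec ν) {t : ℝ}
    (ht : ∀ Γ, IsCoupling μ ν Γ → t < transportCost d Γ) : ∃ f, t < dualValue d μ ν f := by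
  obtain ⟨F, G, hFG, hlt⟩ := exists_admissible_potentials_gt d hμ hν ht
  exact ⟨F, hlt.trans_le (sum_add_sum_le_dualValue d hν.1 hFG)⟩

theorem wass_le_transportCost {Γ : X × X → ℝ} (hΓ : IsCoupling μ ν Γ) :
    Wass d μ ν ≤ transportCost d Γ :=
  csInf_le ⟨dualValue d μ ν 0, fun _ ⟨_, hΓ', hc⟩ => hc ▸ dualValue_le_transportCost d hΓ' 0⟩
    ⟨Γ, hΓ, rfl⟩

theorem dualValue_le_wass (hμ : IsProbVec μ) (hν : IsProbVec ν) (f : X → ℝ) :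
    dualValue d μ ν f ≤ Wass d μ ν :=
  le_csInf ⟨_, _, isCoupling_mul hμ hν, rfl⟩ fun _ ⟨_, hΓ, hc⟩ =>
    hc ▸ dualValue_le_transportCost d hΓ f

end Transport

theorem kantorovich_duality_one_potential_general
    {X : Type*} [Fintype X] [Nonempty X]
    (d : X → X → ℝ)
    (μ ν : X → ℝ) (hμ : IsProbVec μ) (hν : IsProbVec ν) :
    Wass d μ ν =
      sSup {s | ∃ f : X → ℝ,
        s = ∑ y, f y * μ y +
          ∑ z₂, (Finset.univ.inf' Finset.univ_nonempty fun z₁ => d z₁ z₂ - f z₁) * ν z₂} := by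
  change Wass d μ ν = sSup {s | ∃ f, s = dualValue d μ ν f}
  have hrange : {s | ∃ f, s = dualValue d μ ν f} = Set.range (dualValue d μ ν) :=
    Set.ext fun _ => exists_congr fun _ => eq_comm
  have hbdd : ∀ s ∈ Set.range (dualValue d μ ν), s ≤ Wass d μ ν :=
    Set.forall_mem_range.2 (dualValue_le_wass d hμ hν)
  rw [hrange]
  refine le_antisymm ?_ (csSup_le (Set.range_nonempty _) hbdd)
  by_contra! hlt
  obtain ⟨f, hf⟩ :=
    exists_lt_dualValue d hμ hν fun Γ hΓ => hlt.trans_le (wass_le_transportCost d hΓ)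
  exact hf.not_ge (le_csSup ⟨_, hbdd⟩ ⟨f, rfl⟩)

/-- One-potential form of Kantorovich duality on a finite space. -/
theorem kantorovich_duality_one_potential
    {X : Type*} [Fintype X] [Nonempty X]
    (d : X → X → ℝ) (hd : IsMetricOn d)
    (μ ν : X → ℝ) (hμ : IsProbVec μ) (hν : IsProbVec ν) :
    Wass d μ ν =
      sSup {s | ∃ f : X → ℝ,
        s = ∑ y, f y * μ y +
          ∑ z₂, (Finset.univ.inf' Finset.univ_nonempty fun z₁ => d z₁ z₂ - f z₁) * ν z₂} :=
  kantorovich_duality_one_potential_general d μ ν hμ hν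
end

section
/- Dynamic-programming recursion for the robust safety function (Lemma 2): in the finite time-inhomogeneous Markov chain setting with rectangular Wasserstein ambiguity sets, for every t ∈ {0, …, T_max − 1} and x ∈ H, S^R(t,x) = sup over probability vectors Q on X with W(Q, P_{t,x}) ≤ δ of [ Σ_{z∈U} Q(z) + Σ_{y∈H} S^R(t+1, y) Q(y) ], with the convention S^R(t', y) = 0 for y ∈ U ∪ E (terminal states contribute no further cost) and S^R(T_max, ·) = 0. -/
open Finset

/-- The Hamming distance on `X`. -/
def hamming {X : Type*} [DecidableEq X] (x y : X) : ℝ := if x = y then 0 else 1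

/-- The probability, under the time-inhomogeneous kernel family `Q`, that the chain started at
state `x` at time `t` hits the unsafe set `U` before hitting the goal set `E` within `n` further
steps (states in `U ∪ E` are treated as absorbing). -/
noncomputable def hitProbAux {X : Type*} [Fintype X] [DecidableEq X] (U E : Finset X)
    (Q : ℕ → X → X → ℝ) : ℕ → ℕ → X → ℝ
  | 0, _, x => if x ∈ U then 1 else 0
  | n + 1, t, x =>
      if x ∈ U then 1
      else if x ∈ E then 0
      else ∑ y, Q t x y * hitProbAux U E Q n (t + 1) y

/-- The robust safety function: the supremum, over all perturbed kernel families whose rows (for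
living states) lie in the Wasserstein (Hamming) ball of radius `δ` around the nominal rows of `P`,
of the probability of hitting `U` before `E`, started from state `x` at time `t`, with almost-sure
hitting-time bound `Tmax`. -/
noncomputable def robustSafety {X : Type*} [Fintype X] [DecidableEq X] (U E : Finset X)
    (P : ℕ → X → X → ℝ) (δ : ℝ) (Tmax : ℕ) (t : ℕ) (x : X) : ℝ :=
  sSup {s | ∃ Q : ℕ → X → X → ℝ,
    (∀ k y, IsProbVec (Q k y)) ∧
    (∀ k y, y ∉ U → y ∉ E → Wass hamming (Q k y) (P k y) ≤ δ) ∧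
    s = hitProbAux U E Q (Tmax - t) t x}

/-!
The robust safety function coincides with the robust Bellman value, computed backward in time by
taking at each living state the supremum of the one-step expectation over the Wasserstein ball.
Every admissible kernel family is dominated by this value step by step. Conversely, since the
ambiguity set is rectangular, one may choose independently at every time-state pair a row that is
`ε`-optimal for the Bellman supremum; the resulting kernel family comes within `n ε` of the value
over `n` steps. The recursion is then the Bellman equation, the value being `1` on `U` and `0` on
`E`.
-/

lemma IsProbVec.dotProduct_le_one {X : Type*} [Fintype X] {Q v : X → ℝ} (hQ : IsProbVec Q)
    (hv : ∀ y, v y ≤ 1) : Q ⬝ᵥ v ≤ 1 :=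
  calc Q ⬝ᵥ v ≤ Q ⬝ᵥ 1 := dotProduct_le_dotProduct_of_nonneg_left hv hQ.1
    _ = 1 := by rw [dotProduct_one, hQ.2]

lemma IsProbVec.dotProduct_sub_const {X : Type*} [Fintype X] {Q : X → ℝ} (hQ : IsProbVec Q)
    (v : X → ℝ) (c : ℝ) : Q ⬝ᵥ (fun y => v y - c) = Q ⬝ᵥ v - c := by
  simp only [dotProduct, mul_sub, sum_sub_distrib, ← sum_mul, hQ.2, one_mul]

lemma dotProduct_eq_sum_add_sum_sdiff {X : Type*} [Fintype X] [DecidableEq X] {U E : Finset X}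
    (hUE : Disjoint U E) {v : X → ℝ} (hU : ∀ y ∈ U, v y = 1) (hE : ∀ y ∈ E, v y = 0)
    (Q : X → ℝ) : Q ⬝ᵥ v = ∑ z ∈ U, Q z + ∑ y ∈ univ \ (U ∪ E), v y * Q y := by
  have hUsum : ∑ y ∈ U, Q y * v y = ∑ z ∈ U, Q z :=
    sum_congr rfl fun y hy => by rw [hU y hy, mul_one]
  have hEsum : ∑ y ∈ E, Q y * v y = 0 := sum_eq_zero fun y hy => by rw [hE y hy, mul_zero]
  rw [dotProduct, ← sum_sdiff (subset_univ (U ∪ E)), sum_union hUE, hUsum, hEsum, add_zero,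
    add_comm]
  simp only [mul_comm]

lemma wass_self_eq_zero {X : Type*} [Fintype X] {d : X → X → ℝ} (hd : ∀ x y, 0 ≤ d x y)
    (hdiag : ∀ x, d x x = 0) {μ : X → ℝ} (hμ : ∀ x, 0 ≤ μ x) : Wass d μ μ = 0 := by
  classical
  have hcost_nonneg : ∀ c ∈ {c | ∃ Γ : X × X → ℝ, IsCoupling μ μ Γ ∧
      c = ∑ p : X × X, Γ p * d p.1 p.2}, 0 ≤ c := by
    rintro c ⟨Γ, hΓ, rfl⟩
    exact sum_nonneg fun p _ => mul_nonneg (hΓ.1 p) (hd _ _)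
  have hdiagonal : IsCoupling μ μ fun p => if p.1 = p.2 then μ p.1 else 0 :=
    ⟨fun p => by dsimp only; split <;> simp [hμ], fun y => by simp, fun z => by simp⟩
  refine le_antisymm (csInf_le ⟨0, hcost_nonneg⟩ ⟨_, hdiagonal, ?_⟩)
    (le_csInf ⟨_, _, hdiagonal, rfl⟩ hcost_nonneg)
  refine (sum_eq_zero fun p _ => ?_).symm
  split_ifs with h
  · rw [h, hdiag, mul_zero]
  · rw [zero_mul]

lemma hamming_nonneg {X : Type*} [DecidableEq X] (x y : X) : 0 ≤ hamming x y := by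
  unfold hamming; split <;> norm_num

lemma hamming_self {X : Type*} [DecidableEq X] (x : X) : hamming x x = 0 := if_pos rfl

section RobustValue

variable {X : Type*} [Fintype X] [DecidableEq X] {U E : Finset X} {P : ℕ → X → X → ℝ} {δ : ℝ}
  {t : ℕ} {x : X}

def ambiguityBall (P : ℕ → X → X → ℝ) (δ : ℝ) (t : ℕ) (x : X) : Set (X → ℝ) :=
  {Q | IsProbVec Q ∧ Wass hamming Q (P t x) ≤ δ}

lemma mem_ambiguityBall_self (hP : IsProbVec (P t x)) (hδ : 0 ≤ δ) :
    P t x ∈ ambiguityBall P δ t x :=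
  ⟨hP, by rw [wass_self_eq_zero hamming_nonneg hamming_self hP.1]; exact hδ⟩

lemma bddAbove_image_dotProduct {v : X → ℝ} (hv : ∀ y, v y ≤ 1) (t : ℕ) (x : X) :
    BddAbove ((· ⬝ᵥ v) '' ambiguityBall P δ t x) :=
  ⟨1, Set.forall_mem_image.2 fun _ hQ => hQ.1.dotProduct_le_one hv⟩

/-- The robust Bellman value with `n` steps to go from state `x` at time `t`. -/
noncomputable def robustValue (U E : Finset X) (P : ℕ → X → X → ℝ) (δ : ℝ) : ℕ → ℕ → X → ℝ
  | 0, _, x => if x ∈ U then 1 else 0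
  | n + 1, t, x =>
      if x ∈ U then 1
      else if x ∈ E then 0
      else sSup ((· ⬝ᵥ robustValue U E P δ n (t + 1)) '' ambiguityBall P δ t x)

lemma robustValue_of_mem_U (hx : x ∈ U) (n t : ℕ) : robustValue U E P δ n t x = 1 := by
  cases n <;> simp [robustValue, hx]

lemma robustValue_of_mem_E (hUE : Disjoint U E) (hx : x ∈ E) (n t : ℕ) :
    robustValue U E P δ n t x = 0 := by
  cases n <;> simp [robustValue, hx, disjoint_right.1 hUE hx]

lemma robustValue_succ_of_live (hxU : x ∉ U) (hxE : x ∉ E) (n t : ℕ) :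
    robustValue U E P δ (n + 1) t x =
      sSup ((· ⬝ᵥ robustValue U E P δ n (t + 1)) '' ambiguityBall P δ t x) := by
  simp [robustValue, hxU, hxE]

lemma robustValue_le_one (n t : ℕ) (x : X) : robustValue U E P δ n t x ≤ 1 := by
  induction n generalizing t x with
  | zero => unfold robustValue; split <;> norm_num
  | succ n ih =>
    by_cases hxU : x ∈ U
    · rw [robustValue_of_mem_U hxU]
    by_cases hxE : x ∈ E
    · simp [robustValue, hxU, hxE]
    rw [robustValue_succ_of_live hxU hxE]
    exact Real.sSup_le (Set.forall_mem_image.2 fun _ hQ => hQ.1.dotProduct_le_one (ih _))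
      zero_le_one

lemma exists_lt_dotProduct_robustValue (hP : IsProbVec (P t x)) (hδ : 0 ≤ δ) (hxU : x ∉ U)
    (hxE : x ∉ E) (n : ℕ) {ε : ℝ} (hε : 0 < ε) :
    ∃ R ∈ ambiguityBall P δ t x,
      robustValue U E P δ (n + 1) t x - ε < R ⬝ᵥ robustValue U E P δ n (t + 1) := by
  rw [robustValue_succ_of_live hxU hxE]
  obtain ⟨_, ⟨R, hR, rfl⟩, hlt⟩ := exists_lt_of_lt_csSup
    ((Set.nonempty_of_mem (mem_ambiguityBall_self hP hδ)).image _) (sub_lt_self _ hε)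
  exact ⟨R, hR, hlt⟩

lemma hitProbAux_succ_of_live {Q : ℕ → X → X → ℝ} (hxU : x ∉ U) (hxE : x ∉ E) (n t : ℕ) :
    hitProbAux U E Q (n + 1) t x = Q t x ⬝ᵥ hitProbAux U E Q n (t + 1) := by
  simp [hitProbAux, hxU, hxE, dotProduct]

lemma hitProbAux_succ_eq_robustValue_of_absorbing {Q : ℕ → X → X → ℝ} (hx : x ∈ U ∨ x ∈ E)
    (n t : ℕ) :
    hitProbAux U E Q (n + 1) t x = robustValue U E P δ (n + 1) t x := by
  by_cases hxU : x ∈ U <;> simp_all [hitProbAux, robustValue]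

lemma hitProbAux_le_one {Q : ℕ → X → X → ℝ} (hQ : ∀ k y, IsProbVec (Q k y)) (n t : ℕ)
    (x : X) : hitProbAux U E Q n t x ≤ 1 := by
  induction n generalizing t x with
  | zero => unfold hitProbAux; split <;> norm_num
  | succ n ih =>
    unfold hitProbAux
    split_ifs
    · exact le_rfl
    · exact zero_le_one
    · exact (hQ t x).dotProduct_le_one (ih _)

lemma hitProbAux_le_robustValue {Q : ℕ → X → X → ℝ} (hQ : ∀ k y, IsProbVec (Q k y))
    (hW : ∀ k y, y ∉ U → y ∉ E → Wass hamming (Q k y) (P k y) ≤ δ) (n t : ℕ) (x : X) :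
    hitProbAux U E Q n t x ≤ robustValue U E P δ n t x := by
  induction n generalizing t x with
  | zero => rfl
  | succ n ih =>
    by_cases hx : x ∈ U ∨ x ∈ E
    · exact (hitProbAux_succ_eq_robustValue_of_absorbing hx n t).le
    rw [not_or] at hx
    rw [hitProbAux_succ_of_live hx.1 hx.2, robustValue_succ_of_live hx.1 hx.2]
    calc Q t x ⬝ᵥ hitProbAux U E Q n (t + 1)
        ≤ Q t x ⬝ᵥ robustValue U E P δ n (t + 1) :=
          dotProduct_le_dotProduct_of_nonneg_left (ih _) (hQ t x).1
      _ ≤ _ := le_csSup (bddAbove_image_dotProduct (robustValue_le_one n _) t x)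
          (Set.mem_image_of_mem _ ⟨hQ t x, hW t x hx.1 hx.2⟩)

lemma exists_robustValue_sub_le_hitProbAux (hP : ∀ k y, IsProbVec (P k y)) (hδ : 0 ≤ δ)
    (Tmax : ℕ) {ε : ℝ} (hε : 0 < ε) :
    ∃ F : ℕ → X → X → ℝ, (∀ k y, F k y ∈ ambiguityBall P δ k y) ∧
      ∀ n t, t + n = Tmax → ∀ x, robustValue U E P δ n t x - n * ε ≤ hitProbAux U E F n t x := by
  have hrow : ∀ k z, ∃ R ∈ ambiguityBall P δ k z, z ∉ U → z ∉ E →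
      robustValue U E P δ (Tmax - (k + 1) + 1) k z - ε <
        R ⬝ᵥ robustValue U E P δ (Tmax - (k + 1)) (k + 1) := by
    intro k z
    by_cases hz : z ∉ U ∧ z ∉ E
    · obtain ⟨R, hR, hlt⟩ := exists_lt_dotProduct_robustValue (hP k z) hδ hz.1 hz.2 _ hε
      exact ⟨R, hR, fun _ _ => hlt⟩
    · exact ⟨P k z, mem_ambiguityBall_self (hP k z) hδ, fun hzU hzE => (hz ⟨hzU, hzE⟩).elim⟩
  choose F hFball hFopt using hrow
  refine ⟨F, hFball, fun n => ?_⟩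
  induction n with
  | zero => intro t _ x; simp [robustValue, hitProbAux]
  | succ n ih =>
    intro t ht x
    by_cases hx : x ∈ U ∨ x ∈ E
    · rw [hitProbAux_succ_eq_robustValue_of_absorbing hx n t]
      exact sub_le_self _ (by positivity)
    rw [not_or] at hx
    have hopt := hFopt t x hx.1 hx.2
    rw [show Tmax - (t + 1) = n by omega] at hopt
    have hstep : F t x ⬝ᵥ (fun y => robustValue U E P δ n (t + 1) y - n * ε) ≤
        F t x ⬝ᵥ hitProbAux U E F n (t + 1) :=
      dotProduct_le_dotProduct_of_nonneg_left (ih (t + 1) (by omega)) (hFball t x).1.1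
    rw [(hFball t x).1.dotProduct_sub_const] at hstep
    rw [hitProbAux_succ_of_live hx.1 hx.2]
    push_cast
    linarith

lemma robustSafety_eq_robustValue (hP : ∀ k y, IsProbVec (P k y)) (hδ : 0 ≤ δ) {Tmax : ℕ}
    (ht : t ≤ Tmax) (x : X) :
    robustSafety U E P δ Tmax t x = robustValue U E P δ (Tmax - t) t x := by
  have hnonempty : {s | ∃ Q : ℕ → X → X → ℝ, (∀ k y, IsProbVec (Q k y)) ∧
      (∀ k y, y ∉ U → y ∉ E → Wass hamming (Q k y) (P k y) ≤ δ) ∧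
      s = hitProbAux U E Q (Tmax - t) t x}.Nonempty :=
    ⟨_, P, hP, fun k y _ _ => (mem_ambiguityBall_self (hP k y) hδ).2, rfl⟩
  refine le_antisymm (csSup_le hnonempty ?_) (le_of_forall_pos_le_add fun ε hε => ?_)
  · rintro _ ⟨Q, hQ, hW, rfl⟩
    exact hitProbAux_le_robustValue hQ hW _ _ _
  set n := Tmax - t
  obtain ⟨F, hF, hFval⟩ :=
    exists_robustValue_sub_le_hitProbAux (U := U) (E := E) hP hδ Tmax (ε := ε / (n + 1))
      (by positivity)
  have hsafe : hitProbAux U E F n t x ≤ robustSafety U E P δ Tmax t x :=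
    le_csSup ⟨1, by rintro _ ⟨Q, hQ, -, rfl⟩; exact hitProbAux_le_one hQ _ _ _⟩
      ⟨F, fun k y => (hF k y).1, fun k y _ _ => (hF k y).2, rfl⟩
  have hslack : (n : ℝ) * (ε / (n + 1)) ≤ ε := by
    rw [mul_div_assoc', div_le_iff₀ (by positivity)]
    nlinarith
  linarith [hFval n t (by omega) x]

end RobustValue

/-- Dynamic-programming recursion for the robust safety function (Lemma 2). -/
theorem robust_safety_recursion
    {X : Type*} [Fintype X] [DecidableEq X]
    (U E : Finset X) (hUE : Disjoint U E)
    (Tmax : ℕ) (P : ℕ → X → X → ℝ) (hP : ∀ k y, IsProbVec (P k y))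
    (δ : ℝ) (hδ : 0 ≤ δ)
    (t : ℕ) (ht : t < Tmax) (x : X) (hxU : x ∉ U) (hxE : x ∉ E) :
    robustSafety U E P δ Tmax t x =
      sSup {s | ∃ Q : X → ℝ, IsProbVec Q ∧ Wass hamming Q (P t x) ≤ δ ∧
        s = ∑ z ∈ U, Q z +
          ∑ y ∈ Finset.univ \ (U ∪ E), robustSafety U E P δ Tmax (t + 1) y * Q y} := by
  have hnext : robustValue U E P δ (Tmax - (t + 1)) (t + 1) = robustSafety U E P δ Tmax (t + 1) :=
    funext fun y => (robustSafety_eq_robustValue hP hδ ht y).symm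
  have hsplit := dotProduct_eq_sum_add_sum_sdiff hUE (v := robustSafety U E P δ Tmax (t + 1))
    (fun y hy => by rw [← hnext, robustValue_of_mem_U hy])
    (fun y hy => by rw [← hnext, robustValue_of_mem_E hUE hy])
  rw [robustSafety_eq_robustValue hP hδ ht.le, show Tmax - t = Tmax - (t + 1) + 1 by omega,
    robustValue_succ_of_live hxU hxE, hnext]
  congr 1
  ext s
  simp only [Set.mem_image, ambiguityBall, Set.mem_ofPred_eq, hsplit, and_assoc]
  exact exists_congr fun Q => by rw [eq_comm]
end
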